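/- Let d ≥ 2 and let G_1 : [n_1]×[r_1] → ℝ, G_k : [r_{k−1}]×[n_k]×[r_k] → ℝ for k = 2,…,d−1, and G_d : [r_{d−1}]×[n_d] → ℝ. Then the supremum norm of their contraction is bounded by the product of the slice norms: ‖G_1∘⋯∘G_d‖_∞ ≤ |||G_1|||·|||G_2|||⋯|||G_d|||. -/

import Mathlib

open scoped BigOperators
open Matrix

/-- Indices `(x_0, …, x_{k-1})` of the first `k` variables (sizes given by `n`). -/
abbrev PreIdx (n : ℕ → ℕ) (k : ℕ) := ∀ i : Fin k, Fin (n i)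

/-- Indices `(x_k, …, x_{d-1})` of the variables with position `≥ k`. -/
abbrev SufIdx (n : ℕ → ℕ) (d k : ℕ) := ∀ i : {i : Fin d // k ≤ (i : ℕ)}, Fin (n i)

/-- Indices of the variables with position in the window `[a, b)`. -/
abbrev MidIdx (n : ℕ → ℕ) (d a b : ℕ) :=
  ∀ i : {i : Fin d // a ≤ (i : ℕ) ∧ (i : ℕ) < b}, Fin (n i)

/-- Glue a prefix index and a suffix index into a full index. -/
def glue {n : ℕ → ℕ} {d k : ℕ} (x : PreIdx n k) (y : SufIdx n d k) : PreIdx n d :=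
  fun i => if h : (i : ℕ) < k then x ⟨i, h⟩ else y ⟨i, Nat.le_of_not_lt h⟩

/-- The `k`-th unfolding matrix of a `d`-dimensional tensor `p`. -/
def unfold {n : ℕ → ℕ} {d : ℕ} (p : PreIdx n d → ℝ) (k : ℕ) :
    Matrix (PreIdx n k) (SufIdx n d k) ℝ :=
  Matrix.of fun x y => p (glue x y)

/-- Column space of a matrix: span of its columns. -/
noncomputable def colSpace {R C : Type*} (M : Matrix R C ℝ) : Submodule ℝ (R → ℝ) :=
  Submodule.span ℝ (Set.range fun c => fun r => M r c)

/-- Row space of a matrix: span of its rows. -/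
noncomputable def rowSpace {R C : Type*} (M : Matrix R C ℝ) : Submodule ℝ (C → ℝ) :=
  Submodule.span ℝ (Set.range fun r => fun c => M r c)

/-- Rank of a matrix (dimension of its column space). -/
noncomputable def mrank {R C : Type*} (M : Matrix R C ℝ) : ℕ :=
  Module.finrank ℝ ↥(colSpace M)

/-- Restriction of a prefix index to the first `k` variables. -/
def takePre {n : ℕ → ℕ} {k : ℕ} (x : PreIdx n (k + 1)) : PreIdx n k :=
  fun i => x ⟨i, Nat.lt_succ_of_lt i.isLt⟩

/-- Extend a prefix index by one more variable. -/
def snoc' {n : ℕ → ℕ} {k : ℕ} (z : PreIdx n k) (a : Fin (n k)) : PreIdx n (k + 1) :=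
  fun i =>
    if h : (i : ℕ) < k then z ⟨i, h⟩
    else Fin.cast (congrArg n (by have := i.isLt; omega : k = (i : ℕ))) a

/-- A family of tensor-train cores: core `k` has shape `r k × n k × r (k+1)`.
(The first and last cores carry a dummy index of size `r 0 = 1`, `r d = 1`.) -/
abbrev CoreType (n r : ℕ → ℕ) (d : ℕ) :=
  ∀ k : Fin d, Fin (r k) → Fin (n k) → Fin (r ((k : ℕ) + 1)) → ℝ

/-- Partial contraction of the first `k` cores. -/
noncomputable def ttPrefixF {d : ℕ} {n r : ℕ → ℕ} (G : CoreType n r d) :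
    (k : ℕ) → k ≤ d → PreIdx n k → Fin (r 0) → Fin (r k) → ℝ
  | 0, _, _, a, b => if (a : ℕ) = (b : ℕ) then 1 else 0
  | k + 1, h, x, a, b =>
      ∑ c : Fin (r k),
        ttPrefixF G k (Nat.le_of_succ_le h) (takePre x) a c * G ⟨k, h⟩ c (x (Fin.last k)) b

/-- Full contraction `G_1 ∘ ⋯ ∘ G_d` of a family of tensor-train cores. -/
noncomputable def ttContract {d : ℕ} {n r : ℕ → ℕ} (G : CoreType n r d)
    (x : PreIdx n d) : ℝ :=
  ∑ a : Fin (r 0), ∑ b : Fin (r d), ttPrefixF G d le_rfl x a b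

/-- The recursively contracted left sketch functions `S_k` built from blocks `s_k`. -/
noncomputable def leftSketch {n m : ℕ → ℕ}
    (s : ∀ k : ℕ, Fin (m (k + 1)) → Fin (n k) → Fin (m k) → ℝ) :
    (k : ℕ) → Fin (m k) → PreIdx n k → ℝ
  | 0, _, _ => 1
  | k + 1, β, x => ∑ c : Fin (m k), s k β (x (Fin.last k)) c * leftSketch s k c (takePre x)

/-- The right-sketched unfolding `Φ̄_k = p ∘ T_{k+1}`. -/
noncomputable def rightSketched {n : ℕ → ℕ} {d : ℕ} (p : PreIdx n d → ℝ)
    {ℓ : ℕ → ℕ} (T : ∀ k : ℕ, SufIdx n d k → Fin (ℓ k) → ℝ) (k : ℕ)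
    (x : PreIdx n k) (γ : Fin (ℓ k)) : ℝ :=
  ∑ y : SufIdx n d k, p (glue x y) * T k y γ

/-- The doubly sketched tensor `Φ̃_{j+1} = S_j ∘ Φ̄_{j+1}`. -/
noncomputable def tildePhi {n : ℕ → ℕ} {d : ℕ} {ℓ m : ℕ → ℕ} (p : PreIdx n d → ℝ)
    (T : ∀ k : ℕ, SufIdx n d k → Fin (ℓ k) → ℝ)
    (s : ∀ k : ℕ, Fin (m (k + 1)) → Fin (n k) → Fin (m k) → ℝ)
    (j : ℕ) (β : Fin (m j)) (xj : Fin (n j)) (γ : Fin (ℓ (j + 1))) : ℝ :=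
  ∑ z : PreIdx n j, leftSketch s j β z * rightSketched p T (j + 1) (snoc' z xj) γ

/-- Marginal of `p` on the window of variables `[a, b)`. -/
noncomputable def winMarg {n : ℕ → ℕ} {d : ℕ} (p : PreIdx n d → ℝ) (a b : ℕ)
    (y : MidIdx n d a b) : ℝ :=
  ∑ z : ∀ i : {i : Fin d // (i : ℕ) < a ∨ b ≤ (i : ℕ)}, Fin (n i),
    p fun i =>
      if h : a ≤ (i : ℕ) ∧ (i : ℕ) < b then y ⟨i, h⟩ else z ⟨i, by omega⟩

/-- Marginal of `p` on the window `[a, b)`, viewed as a matrix with rows indexed by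
variables in `[a, c)` and columns by variables in `[c, b)`. -/
noncomputable def winMatrix {n : ℕ → ℕ} {d : ℕ} (p : PreIdx n d → ℝ) (a c b : ℕ) :
    Matrix (MidIdx n d a c) (MidIdx n d c b) ℝ :=
  Matrix.of fun x y =>
    ∑ z : ∀ i : {i : Fin d // (i : ℕ) < a ∨ b ≤ (i : ℕ)}, Fin (n i),
      p fun i =>
        if h1 : a ≤ (i : ℕ) ∧ (i : ℕ) < c then x ⟨i, h1⟩
        else if h2 : c ≤ (i : ℕ) ∧ (i : ℕ) < b then y ⟨i, h2⟩
        else z ⟨i, by omega⟩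

/-- A (first-order) discrete Markov model: a probability density such that for all
`2 ≤ k ≤ d - 1` (1-based), `p(x) · p_k(x_k) = p_{1:k}(x_{1:k}) · p_{k:d}(x_{k:d})`. -/
def IsMarkov {n : ℕ → ℕ} {d : ℕ} (p : PreIdx n d → ℝ) : Prop :=
  (∀ x, 0 ≤ p x) ∧ (∑ x : PreIdx n d, p x) = 1 ∧
    ∀ k : ℕ, 2 ≤ k → k ≤ d - 1 → ∀ x : PreIdx n d,
      p x * winMarg p (k - 1) k (fun i => x i.1) =
        winMarg p 0 k (fun i => x i.1) * winMarg p (k - 1) d (fun i => x i.1)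

/-- An order-`m` discrete Markov model. -/
def IsMarkovOrder {n : ℕ → ℕ} {d : ℕ} (m : ℕ) (p : PreIdx n d → ℝ) : Prop :=
  (∀ x, 0 ≤ p x) ∧ (∑ x : PreIdx n d, p x) = 1 ∧
    ∀ k : ℕ, m + 1 ≤ k → k ≤ d - 1 → ∀ x : PreIdx n d,
      p x * winMarg p (k - m) k (fun i => x i.1) =
        winMarg p 0 k (fun i => x i.1) * winMarg p (k - m) d (fun i => x i.1)

/-- Spectral norm (ℓ² → ℓ² operator norm) of a matrix. -/
noncomputable def specNorm {R C : Type*} [Fintype R] [Fintype C] [DecidableEq C]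
    (M : Matrix R C ℝ) : ℝ :=
  ‖LinearMap.toContinuousLinearMap (Matrix.toEuclideanLin M)‖

/-- Moore–Penrose pseudoinverse of a full-column-rank matrix, `A⁺ = (AᵀA)⁻¹Aᵀ`. -/
noncomputable def pinv {m n : ℕ} (A : Matrix (Fin m) (Fin n) ℝ) :
    Matrix (Fin n) (Fin m) ℝ :=
  (Aᵀ * A)⁻¹ * Aᵀ

/-- The norm `|||G|||`: max over the middle index of the spectral norm of the slices. -/
noncomputable def tnorm {a b c : ℕ} (G : Fin a → Fin b → Fin c → ℝ) : ℝ :=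
  ⨆ i : Fin b, specNorm (Matrix.of fun x y => G x i y)

/-- Supremum norm of a 3-tensor. -/
noncomputable def supNorm3 {a b c : ℕ} (G : Fin a → Fin b → Fin c → ℝ) : ℝ :=
  ⨆ q : Fin a × Fin b × Fin c, |G q.1 q.2.1 q.2.2|

/-- Supremum norm of a `d`-dimensional tensor. -/
noncomputable def supNormF {n : ℕ → ℕ} {d : ℕ} (f : PreIdx n d → ℝ) : ℝ :=
  ⨆ x : PreIdx n d, |f x|

/-! Fix the index `x`. The partial contractions `ttPrefixF G k x a` are row vectors obeying
`v_{k+1} = v_k ⬝ G_k(·, x_k, ·)`, so each step multiplies the Euclidean norm by at most the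
spectral norm of a slice, hence by at most `|||G_k|||`. The recursion starts from a unit vector,
and every entry of the final vector is bounded by its norm; the boundary ranks being `1`, the
contraction is that single entry. -/

open scoped Matrix.Norms.L2Operator

lemma tnorm_nonneg {a b c : ℕ} (G : Fin a → Fin b → Fin c → ℝ) : 0 ≤ tnorm G :=
  Real.iSup_nonneg fun _ => norm_nonneg _

lemma specNorm_le_tnorm {a b c : ℕ} (G : Fin a → Fin b → Fin c → ℝ) (i : Fin b) :
    specNorm (Matrix.of fun x y => G x i y) ≤ tnorm G :=
  le_ciSup (f := fun i => specNorm (Matrix.of fun x y => G x i y)) (Set.finite_range _).bddAbove i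

lemma norm_vecMul_le_specNorm_mul {m n : Type*} [Fintype m] [Fintype n] [DecidableEq m]
    [DecidableEq n] (M : Matrix m n ℝ) (v : EuclideanSpace ℝ m) :
    ‖(EuclideanSpace.equiv n ℝ).symm (v ᵥ* M)‖ ≤ specNorm M * ‖v‖ := by
  have hT : ‖Mᵀ‖ = specNorm M := by
    rw [← Matrix.conjTranspose_eq_transpose_of_trivial, Matrix.l2_opNorm_conjTranspose]; rfl
  rw [← Matrix.mulVec_transpose, ← hT]
  exact Matrix.l2_opNorm_mulVec Mᵀ v

section TensorTrain

variable {d : ℕ} {n r : ℕ → ℕ} (G : CoreType n r d)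

lemma ttPrefixF_zero (h : 0 ≤ d) (x : PreIdx n 0) (a : Fin (r 0)) :
    ttPrefixF G 0 h x a = Pi.single a 1 := by
  ext b
  simp only [ttPrefixF, Pi.single_apply, Fin.val_inj, eq_comm]

lemma ttPrefixF_succ {k : ℕ} (h : k + 1 ≤ d) (x : PreIdx n (k + 1)) (a : Fin (r 0)) :
    ttPrefixF G (k + 1) h x a =
      ttPrefixF G k (Nat.le_of_succ_le h) (takePre x) a ᵥ*
        Matrix.of fun c b => G ⟨k, h⟩ c (x (Fin.last k)) b :=
  rfl

lemma norm_ttPrefixF_le (k : ℕ) (h : k ≤ d) (x : PreIdx n k) (a : Fin (r 0)) :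
    ‖(EuclideanSpace.equiv (Fin (r k)) ℝ).symm (ttPrefixF G k h x a)‖ ≤
      ∏ j : Fin k, tnorm (G (Fin.castLE h j)) := by
  induction k with
  | zero => simp [ttPrefixF_zero]
  | succ k ih =>
    rw [ttPrefixF_succ, Fin.prod_univ_castSucc, mul_comm]
    exact (norm_vecMul_le_specNorm_mul _ _).trans
      (mul_le_mul (specNorm_le_tnorm _ _) (ih _ _) (norm_nonneg _) (tnorm_nonneg _))

lemma abs_ttContract_le (x : PreIdx n d) :
    |ttContract G x| ≤ r 0 * r d * ∏ k, tnorm (G k) := by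
  have hentry : ∀ a b, |ttPrefixF G d le_rfl x a b| ≤ ∏ k, tnorm (G k) := fun a b => by
    simpa using (PiLp.norm_apply_le _ b).trans (norm_ttPrefixF_le G d le_rfl x a)
  calc |ttContract G x| ≤ ∑ a : Fin (r 0), ∑ b : Fin (r d), |ttPrefixF G d le_rfl x a b| :=
        (Finset.abs_sum_le_sum_abs _ _).trans
          (Finset.sum_le_sum fun a _ => Finset.abs_sum_le_sum_abs _ _)
    _ ≤ ∑ _a : Fin (r 0), ∑ _b : Fin (r d), ∏ k, tnorm (G k) :=
        Finset.sum_le_sum fun a _ => Finset.sum_le_sum fun b _ => hentry a b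
    _ = r 0 * r d * ∏ k, tnorm (G k) := by simp [mul_assoc]

end TensorTrain

/-- the sup norm of a contraction of cores is bounded by the product of
the slice norms: `‖G_1 ∘ ⋯ ∘ G_d‖_∞ ≤ |||G_1||| ⋯ |||G_d|||`.
(Here `d = d₀ + 2 ≥ 2`, with dummy boundary ranks `r 0 = r d = 1`, for which `tnorm`
agrees with the Euclidean row/column norms of the paper on the first/last cores.) -/
theorem contraction_supNorm_le_prod_tnorm
    (d₀ : ℕ) (n r : ℕ → ℕ) (hr0 : r 0 = 1) (hrd : r (d₀ + 2) = 1)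
    (G : CoreType n r (d₀ + 2)) :
    supNormF (fun x => ttContract G x) ≤ ∏ k, tnorm (G k) :=
  Real.iSup_le (fun x => by simpa [hr0, hrd] using abs_ttContract_le G x)
    (Finset.prod_nonneg fun k _ => tnorm_nonneg _)
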